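/- Included moves cannot be better: let G be a relevant position of the game influence. If y, y' ∈ R(G) with y' ∈ Rmv(G,y), then s^L_1(G_{y'}) ≥ s^L_1(G_y); if x, x' ∈ L(G) with x' ∈ Rmv(G,x), then s^R_1(G_{x'}) ≥ s^R_1(G_x). -/

import Mathlib

namespace Influence

open Finset

/-- A position of the game `influence`: a finite directed graph with vertex set `V`,
arc set `A`, and the set `left` of Left (black) vertices; Right's vertices are `V \ left`. -/
structure Pos (α : Type) [DecidableEq α] where
  V : Finset α
  A : Finset (α × α)
  left : Finset α

variable {α : Type} [DecidableEq α]

namespace Pos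

/-- The set of Right vertices. -/
def R (G : Pos α) : Finset α := G.V \ G.left

/-- Well-formedness: arcs join vertices, and Left vertices are vertices. -/
def WF (G : Pos α) : Prop :=
  (∀ p ∈ G.A, p.1 ∈ G.V ∧ p.2 ∈ G.V) ∧ G.left ⊆ G.V

open Classical in
/-- `Succ G x`: vertices reachable from `x` by a directed path (including `x` itself). -/
noncomputable def Succ (G : Pos α) (x : α) : Finset α :=
  G.V.filter (fun z => Relation.ReflTransGen (fun a b => (a, b) ∈ G.A) x z)

open Classical in
/-- `Pred G y`: vertices from which `y` is reachable by a directed path (including `y`). -/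
noncomputable def Pred (G : Pos α) (y : α) : Finset α :=
  G.V.filter (fun z => Relation.ReflTransGen (fun a b => (a, b) ∈ G.A) z y)

open Classical in
noncomputable def ForcL (G : Pos α) : Finset α :=
  G.left.filter (fun x => G.Succ x ⊆ G.left)

open Classical in
noncomputable def ForcR (G : Pos α) : Finset α :=
  G.R.filter (fun y => G.Pred y ⊆ G.R)

noncomputable def Forc (G : Pos α) : Finset α := G.ForcL ∪ G.ForcR

/-- A relevant position: no forced vertices. -/
def Relevant (G : Pos α) : Prop := G.Forc = ∅

/-- The induced subgraph `G ∖ S` on `V(G) \ S`. -/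
def erase (G : Pos α) (S : Finset α) : Pos α :=
  ⟨G.V \ S, G.A.filter (fun p => p.1 ∈ G.V \ S ∧ p.2 ∈ G.V \ S), G.left \ S⟩

open Classical in
/-- The set of vertices removed when playing `x`:  for `x ∈ L`,
`Rmv(G,x) = Succ(G,x) ∪ Forc(G ∖ Succ(G,x))`; for `y ∈ R`,
`Rmv(G,y) = Pred(G,y) ∪ Forc(G ∖ Pred(G,y))`. -/
noncomputable def Rmv (G : Pos α) (x : α) : Finset α :=
  if x ∈ G.left then G.Succ x ∪ (G.erase (G.Succ x)).Forc
  else G.Pred x ∪ (G.erase (G.Pred x)).Forc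

/-- The resulting relevant position `G_x` after the move `x`. -/
noncomputable def move (G : Pos α) (x : α) : Pos α := G.erase (G.Rmv x)

mutual
/-- Auxiliary (fuel-indexed) score of Left playing first. -/
noncomputable def sL1Aux : ℕ → Pos α → ℕ
  | 0, _ => 0
  | k + 1, G =>
      if G.left.Nonempty then
        G.left.sup (fun x => (G.Rmv x).card + sL2Aux k (G.move x))
      else 0

/-- Auxiliary (fuel-indexed) score of Left playing second. -/
noncomputable def sL2Aux : ℕ → Pos α → ℕ
  | 0, _ => 0
  | k + 1, G =>
      if h : G.R.Nonempty then G.R.inf' h (fun y => sL1Aux k (G.move y))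
      else 0
end

mutual
/-- Auxiliary (fuel-indexed) score of Right playing first. -/
noncomputable def sR1Aux : ℕ → Pos α → ℕ
  | 0, _ => 0
  | k + 1, G =>
      if G.R.Nonempty then
        G.R.sup (fun y => (G.Rmv y).card + sR2Aux k (G.move y))
      else 0

/-- Auxiliary (fuel-indexed) score of Right playing second. -/
noncomputable def sR2Aux : ℕ → Pos α → ℕ
  | 0, _ => 0
  | k + 1, G =>
      if h : G.left.Nonempty then G.left.inf' h (fun x => sR1Aux k (G.move x))
      else 0
end

/-- `s^L_1(G)`: the score of Left when Left plays first (optimal play). -/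
noncomputable def sL1 (G : Pos α) : ℕ := sL1Aux G.V.card G

/-- `s^L_2(G)`: the score of Left when Right plays first (optimal play). -/
noncomputable def sL2 (G : Pos α) : ℕ := sL2Aux G.V.card G

/-- `s^R_1(G)`: the score of Right when Right plays first (optimal play). -/
noncomputable def sR1 (G : Pos α) : ℕ := sR1Aux G.V.card G

/-- `s^R_2(G)`: the score of Right when Left plays first (optimal play). -/
noncomputable def sR2 (G : Pos α) : ℕ := sR2Aux G.V.card G

/-- The Left score `Ls(G) = s^L_1(G) - s^R_2(G)`. -/
noncomputable def Ls (G : Pos α) : ℤ := (G.sL1 : ℤ) - (G.sR2 : ℤ)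

/-- The Right score `Rs(G) = s^L_2(G) - s^R_1(G)`. -/
noncomputable def Rs (G : Pos α) : ℤ := (G.sL2 : ℤ) - (G.sR1 : ℤ)

/-- Disjoint union (game sum) of two positions. -/
def union (G G' : Pos α) : Pos α := ⟨G.V ∪ G'.V, G.A ∪ G'.A, G.left ∪ G'.left⟩

/-- The empty position. -/
protected def empty : Pos α := ⟨∅, ∅, ∅⟩

end Pos

/-- The sum of a finite list of positions. -/
def sumList (l : List (Pos α)) : Pos α := l.foldr Pos.union Pos.empty

open Classical in
/-- `G` is a segment: its vertex set is a set of at least two consecutive integers,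
Left's vertices are the even ones, Right's the odd ones, and there is an arc from each
even vertex to each of its (odd) neighbours `±1` lying in the vertex set. -/
def IsSegment (G : Pos ℤ) : Prop :=
  2 ≤ G.V.card ∧
  (∀ i j k : ℤ, i ∈ G.V → j ∈ G.V → i ≤ k → k ≤ j → k ∈ G.V) ∧
  G.left = G.V.filter (fun n => Even n) ∧
  G.A = (G.V ×ˢ G.V).filter (fun p => Even p.1 ∧ (p.2 = p.1 + 1 ∨ p.2 = p.1 - 1))

/-- `G` is the finite disjoint union (game sum) of the list `l` of segments. -/
def IsSegUnion (G : Pos ℤ) (l : List (Pos ℤ)) : Prop :=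
  (∀ H ∈ l, IsSegment H) ∧
  l.Pairwise (fun H H' => Disjoint H.V H'.V) ∧
  G = sumList l


open Classical in
/-- `G` is an alternated cycle: obtained from a segment `S` with an even number of
vertices by adding the arc `(x, y)` where `x` is the endpoint of `S` in `L` (even) and
`y` the endpoint in `R` (odd). -/
def IsAltCycle (G : Pos ℤ) : Prop :=
  ∃ (S : Pos ℤ) (x y : ℤ), IsSegment S ∧ Even S.V.card ∧
    x ∈ S.V ∧ y ∈ S.V ∧ Even x ∧ ¬ Even y ∧
    (∀ z ∈ S.V, min x y ≤ z ∧ z ≤ max x y) ∧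
    G.V = S.V ∧ G.left = S.left ∧ G.A = insert (x, y) S.A

open Classical in
/-- `T` is (a copy of) the oriented tree `T_n^c`: a rooted tree of depth `n+1`, all arcs
oriented from parent to child, in which every vertex at level `k ≤ n-1` has exactly `3`
children, every vertex at level `n` has exactly `c` children, the leaves (level `n+1`)
are the Right vertices and all other vertices are Left vertices. -/
def IsTnc (n c : ℕ) (T : Pos α) : Prop :=
  T.WF ∧ ∃ lvl : α → ℕ,
    (∀ v ∈ T.V, lvl v ≤ n + 1) ∧
    T.left = T.V.filter (fun v => lvl v ≤ n) ∧
    (∃! r, r ∈ T.V ∧ lvl r = 0) ∧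
    (∀ p ∈ T.A, lvl p.2 = lvl p.1 + 1) ∧
    (∀ v ∈ T.V, 0 < lvl v → ∃! u, (u, v) ∈ T.A) ∧
    (∀ v ∈ T.V, lvl v < n → (T.V.filter (fun w => (v, w) ∈ T.A)).card = 3) ∧
    (∀ v ∈ T.V, lvl v = n → (T.V.filter (fun w => (v, w) ∈ T.A)).card = c)

/-- `J` is (a copy of) `J_n^c`, the disjoint union of two disjoint copies of `T_n^c`. -/
def IsJnc (n c : ℕ) (J : Pos α) : Prop :=
  ∃ T1 T2 : Pos α, IsTnc n c T1 ∧ IsTnc n c T2 ∧ Disjoint T1.V T2.V ∧ J = T1.union T2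

end Influence

/-!
For a relevant position `G` and a Right vertex `y`, `Rmv(G, y)` is the set of vertices all of whose
Left ancestors are ancestors of `y`. With this description, moves commute: two Right moves lead to
the same position in either order, and so do a Left move `x` and a Right move `y` when neither
removes the other. In particular, if `y' ∈ Rmv(G, y)` then `G_y = (G_{y'})_y`. An induction on
`|V(G)|` that uses these commutations shows that a Right move never increases `s^L_1` or `s^L_2`
(together with `s^L_2 ≤ s^L_1`), and applying this to `G_{y'}` gives the claim. The claim for Left
is the one for Right in the position with arcs reversed and colours exchanged.
-/

namespace Influence.Pos

open Finset

variable {α : Type} [DecidableEq α] {G : Pos α} {S T : Finset α} {a b x y y' z : α}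

/-! ### Reachability and deletion of vertex sets -/

def Reach (G : Pos α) : α → α → Prop := Relation.ReflTransGen fun a b => (a, b) ∈ G.A

lemma mem_Succ : z ∈ G.Succ x ↔ z ∈ G.V ∧ G.Reach x z := by
  classical simp [Succ, Reach]

lemma mem_Pred : z ∈ G.Pred y ↔ z ∈ G.V ∧ G.Reach z y := by
  classical simp [Pred, Reach]

lemma mem_R : z ∈ G.R ↔ z ∈ G.V ∧ z ∉ G.left := mem_sdiff

lemma mem_Succ_self (hx : x ∈ G.V) : x ∈ G.Succ x := mem_Succ.2 ⟨hx, .refl⟩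

lemma mem_Pred_self (hy : y ∈ G.V) : y ∈ G.Pred y := mem_Pred.2 ⟨hy, .refl⟩

lemma Pred_subset_Pred_of_mem (h : z ∈ G.Pred y) : G.Pred z ⊆ G.Pred y := fun _ hu =>
  mem_Pred.2 ⟨(mem_Pred.1 hu).1, (mem_Pred.1 hu).2.trans (mem_Pred.1 h).2⟩

lemma WF.mem_V_of_reach (hwf : G.WF) (h : G.Reach a b) (ha : a ∈ G.V) : b ∈ G.V := by
  induction h with
  | refl => exact ha
  | tail _ hbc _ => exact (hwf.1 _ hbc).2

lemma WF.Pred_eq_empty (hwf : G.WF) (hy : y ∉ G.V) : G.Pred y = ∅ :=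
  eq_empty_of_forall_notMem fun _ hu =>
    hy (hwf.mem_V_of_reach (mem_Pred.1 hu).2 (mem_Pred.1 hu).1)

lemma self_mem_Rmv (hx : x ∈ G.V) : x ∈ G.Rmv x := by
  unfold Rmv
  split_ifs
  · exact mem_union_left _ (mem_Succ_self hx)
  · exact mem_union_left _ (mem_Pred_self hx)

lemma card_move_lt (hx : x ∈ G.V) : (G.move x).V.card < G.V.card :=
  card_lt_card ⟨sdiff_subset, fun h => (mem_sdiff.1 (h hx)).2 (self_mem_Rmv hx)⟩

def PredClosed (G : Pos α) (S : Finset α) : Prop := ∀ p ∈ G.A, p.2 ∈ S → p.1 ∈ S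

lemma PredClosed.mem_of_reach (hS : G.PredClosed S) (h : G.Reach a b) (hb : b ∈ S) : a ∈ S := by
  induction h with
  | refl => exact hb
  | tail _ hbc ih => exact ih (hS _ hbc hb)

lemma WF.Pred_predClosed (hwf : G.WF) (y : α) : G.PredClosed (G.Pred y) := fun _ hp h2 =>
  mem_Pred.2 ⟨(hwf.1 _ hp).1, .head hp (mem_Pred.1 h2).2⟩

@[simp] lemma erase_V : (G.erase S).V = G.V \ S := rfl

@[simp] lemma erase_left : (G.erase S).left = G.left \ S := rfl

lemma mem_erase_A {p : α × α} :
    p ∈ (G.erase S).A ↔ p ∈ G.A ∧ p.1 ∈ G.V \ S ∧ p.2 ∈ G.V \ S := mem_filter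

lemma erase_R : (G.erase S).R = G.R \ S := by
  ext z
  simp only [mem_R, erase_V, erase_left, mem_sdiff]
  tauto

lemma WF.erase (hwf : G.WF) (S : Finset α) : (G.erase S).WF :=
  ⟨fun _ hp => (mem_erase_A.1 hp).2, sdiff_subset_sdiff hwf.2 le_rfl⟩

lemma WF.move (hwf : G.WF) (x : α) : (G.move x).WF := hwf.erase _

lemma WF.erase_empty (hwf : G.WF) : G.erase ∅ = G := by
  obtain ⟨V, A, L⟩ := G
  simp only [Pos.erase, sdiff_empty, Pos.mk.injEq, true_and, and_true]
  exact filter_true_of_mem hwf.1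

lemma erase_erase : (G.erase S).erase T = G.erase (S ∪ T) := by
  simp only [Pos.erase, sdiff_sdiff_left, Pos.mk.injEq, filter_filter]
  refine ⟨rfl, filter_congr fun p _ => ?_, rfl⟩
  simp only [mem_sdiff, mem_union, sup_eq_union]
  tauto

lemma Reach.of_erase (h : (G.erase S).Reach a b) : G.Reach a b :=
  Relation.ReflTransGen.mono (fun _ _ hp => (mem_erase_A.1 hp).1) _ _ h

lemma PredClosed.reach_erase (hwf : G.WF) (hS : G.PredClosed S) (h : G.Reach a b)
    (ha : a ∉ S) : (G.erase S).Reach a b := by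
  induction h using Relation.ReflTransGen.head_induction_on with
  | refl => exact .refl
  | head hac _ ih =>
    have hc := fun hc => ha (hS _ hac hc)
    exact .head (mem_erase_A.2 ⟨hac, mem_sdiff.2 ⟨(hwf.1 _ hac).1, ha⟩,
      mem_sdiff.2 ⟨(hwf.1 _ hac).2, hc⟩⟩) (ih hc)

lemma PredClosed.Pred_erase (hwf : G.WF) (hS : G.PredClosed S) :
    (G.erase S).Pred z = G.Pred z \ S := by
  ext u
  simp only [mem_Pred, mem_sdiff, erase_V]
  exact ⟨fun ⟨⟨hu, huS⟩, h⟩ => ⟨⟨hu, h.of_erase⟩, huS⟩,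
    fun ⟨⟨hu, h⟩, huS⟩ => ⟨⟨hu, huS⟩, hS.reach_erase hwf h huS⟩⟩

lemma PredClosed.Succ_erase (hwf : G.WF) (hS : G.PredClosed S) (hz : z ∉ S) :
    (G.erase S).Succ z = G.Succ z := by
  ext u
  simp only [mem_Succ, mem_sdiff, erase_V]
  exact ⟨fun ⟨⟨hu, _⟩, h⟩ => ⟨hu, h.of_erase⟩,
    fun ⟨hu, h⟩ => ⟨⟨hu, fun huS => hz (hS.mem_of_reach h huS)⟩, hS.reach_erase hwf h hz⟩⟩

lemma relevant_iff :
    G.Relevant ↔ (∀ x ∈ G.left, ¬ G.Succ x ⊆ G.left) ∧ ∀ y ∈ G.R, ¬ G.Pred y ⊆ G.R := by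
  classical
  simp [Relevant, Forc, ForcL, ForcR, filter_eq_empty_iff]

/-! ### Right moves in a relevant position -/

open Classical in
/-- Once `S` is deleted these vertices have no Left ancestor, so they become forced for Right;
in a relevant position, `Rmv G y = G.captured (G.Pred y)`. -/
noncomputable def captured (G : Pos α) (S : Finset α) : Finset α :=
  G.V.filter fun z => ∀ u ∈ G.Pred z, u ∈ G.left → u ∈ S

lemma mem_captured : z ∈ G.captured S ↔ z ∈ G.V ∧ ∀ u ∈ G.Pred z, u ∈ G.left → u ∈ S := by
  classical simp [captured]

lemma mem_of_mem_captured (h : z ∈ G.captured S) (hz : z ∈ G.left) : z ∈ S :=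
  (mem_captured.1 h).2 z (mem_Pred_self (mem_captured.1 h).1) hz

lemma captured_mono (h : S ⊆ T) : G.captured S ⊆ G.captured T := fun _ hz =>
  mem_captured.2 ⟨(mem_captured.1 hz).1, fun u hu hul => h ((mem_captured.1 hz).2 u hu hul)⟩

lemma Pred_subset_captured : G.Pred y ⊆ G.captured (G.Pred y) := fun _ hz =>
  mem_captured.2 ⟨(mem_Pred.1 hz).1, fun _ hu _ => Pred_subset_Pred_of_mem hz hu⟩

lemma WF.captured_predClosed (hwf : G.WF) : G.PredClosed (G.captured S) := fun _ hp h2 =>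
  mem_captured.2 ⟨(hwf.1 _ hp).1, fun u hu hul => (mem_captured.1 h2).2 u
    (mem_Pred.2 ⟨(mem_Pred.1 hu).1, (mem_Pred.1 hu).2.tail hp⟩) hul⟩

lemma PredClosed.captured_erase (hwf : G.WF) (hS : G.PredClosed S) :
    (G.erase S).captured T = G.captured (T ∪ S) \ S := by
  ext z
  simp only [mem_captured, hS.Pred_erase hwf, erase_V, erase_left, mem_sdiff, mem_union]
  constructor
  · rintro ⟨⟨hz, hzS⟩, h⟩
    exact ⟨⟨hz, fun u hu hul => or_iff_not_imp_right.2 fun huS => h u ⟨hu, huS⟩ ⟨hul, huS⟩⟩, hzS⟩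
  · rintro ⟨⟨hz, h⟩, hzS⟩
    exact ⟨⟨hz, hzS⟩, fun u hu hul => (h u hu.1 hul.1).resolve_right hu.2⟩

lemma captured_union_captured (hS : S ⊆ G.captured S) :
    G.captured S ∪ G.captured (T ∪ G.captured S) = G.captured (S ∪ T) := by
  refine subset_antisymm (union_subset (captured_mono subset_union_left) fun z hz => ?_)
    fun _ hz => mem_union_right _ (captured_mono ?_ hz)
  · refine mem_captured.2 ⟨(mem_captured.1 hz).1, fun u hu hul => ?_⟩
    rcases mem_union.1 ((mem_captured.1 hz).2 u hu hul) with hT | hS'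
    · exact mem_union_right _ hT
    · exact mem_union_left _ (mem_of_mem_captured hS' hul)
  · rw [union_comm S T]
    exact union_subset_union_right hS

lemma Relevant.Rmv_eq_captured (hwf : G.WF) (hrel : G.Relevant) (hy : y ∈ G.R) :
    G.Rmv y = G.captured (G.Pred y) := by
  have hP := hwf.Pred_predClosed y
  have hL : (G.erase (G.Pred y)).ForcL = ∅ := by
    classical
    refine filter_eq_empty_iff.2 fun x hx hsub => ?_
    rw [hP.Succ_erase hwf (mem_sdiff.1 hx).2] at hsub
    exact (relevant_iff.1 hrel).1 x (mem_sdiff.1 hx).1 (hsub.trans sdiff_subset)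
  have hR : (G.erase (G.Pred y)).ForcR = G.captured (G.Pred y) \ G.Pred y := by
    classical
    ext z
    simp only [ForcR, mem_filter, erase_R, hP.Pred_erase hwf, mem_sdiff, mem_captured,
      subset_iff, mem_R, and_imp]
    constructor
    · rintro ⟨⟨⟨hz, -⟩, hzP⟩, h⟩
      exact ⟨⟨hz, fun u hu hul => by_contra fun huP => (h hu huP).1.2 hul⟩, hzP⟩
    · rintro ⟨⟨hz, h⟩, hzP⟩
      have hR' : ∀ u ∈ G.Pred z, u ∉ G.Pred y → u ∉ G.left := fun u hu huP hul =>
        huP (h u hu hul)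
      exact ⟨⟨⟨hz, hR' z (mem_Pred_self hz) hzP⟩, hzP⟩,
        fun u hu huP => ⟨⟨(mem_Pred.1 hu).1, hR' _ hu huP⟩, huP⟩⟩
  rw [Rmv, if_neg (mem_R.1 hy).2, Forc, hL, hR, empty_union,
    union_sdiff_of_subset Pred_subset_captured]

lemma Relevant.Rmv_predClosed (hwf : G.WF) (hrel : G.Relevant) (hy : y ∈ G.R) :
    G.PredClosed (G.Rmv y) :=
  hrel.Rmv_eq_captured hwf hy ▸ hwf.captured_predClosed

lemma Relevant.move_of_mem_R (hwf : G.WF) (hrel : G.Relevant) (hy : y ∈ G.R) :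
    (G.move y).Relevant := by
  have hC := hrel.Rmv_predClosed hwf hy
  refine relevant_iff.2 ⟨fun x hx hsub => ?_, fun z hz hsub => ?_⟩
  · rw [move, hC.Succ_erase hwf (mem_sdiff.1 hx).2] at hsub
    exact (relevant_iff.1 hrel).1 x (mem_sdiff.1 hx).1 (hsub.trans sdiff_subset)
  · rw [move, erase_R] at hz
    rw [move, erase_R, hC.Pred_erase hwf] at hsub
    refine (mem_sdiff.1 hz).2 ?_
    rw [hrel.Rmv_eq_captured hwf hy] at hsub ⊢
    refine mem_captured.2 ⟨(mem_R.1 (mem_sdiff.1 hz).1).1, fun u hu hul => ?_⟩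
    by_cases huC : u ∈ G.captured (G.Pred y)
    · exact mem_of_mem_captured huC hul
    · exact absurd hul (mem_R.1 (mem_sdiff.1 (hsub (mem_sdiff.2 ⟨hu, huC⟩))).1).2

lemma Relevant.move_eq_self (hwf : G.WF) (hrel : G.Relevant) (hy : y ∉ G.V) : G.move y = G := by
  rw [move, Rmv, if_neg fun h => hy (hwf.2 h), hwf.Pred_eq_empty hy, hwf.erase_empty, hrel,
    empty_union, hwf.erase_empty]

lemma Relevant.move_move (hwf : G.WF) (hrel : G.Relevant) (hy : y ∈ G.R) (hy' : y' ∈ G.R) :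
    (G.move y).move y' = G.erase (G.captured (G.Pred y ∪ G.Pred y')) := by
  have hC := hrel.Rmv_predClosed hwf hy
  have hrelC := hrel.move_of_mem_R hwf hy
  by_cases h : y' ∈ G.Rmv y
  · rw [hrelC.move_eq_self (hwf.move y) fun h' => (mem_sdiff.1 h').2 h, Pos.move,
      hrel.Rmv_eq_captured hwf hy]
    congr 1
    ext z
    simp only [mem_captured, mem_union]
    refine and_congr_right fun _ => forall₃_congr fun u _ hul =>
      (or_iff_left_of_imp fun hu => ?_).symm
    rw [hrel.Rmv_eq_captured hwf hy] at h
    exact (mem_captured.1 h).2 u hu hul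
  · have hy'C : y' ∈ (G.move y).R := by
      rw [move, erase_R]
      exact mem_sdiff.2 ⟨hy', h⟩
    rw [Pos.move, hrelC.Rmv_eq_captured (hwf.move y) hy'C, Pos.move, hC.Pred_erase hwf,
      hC.captured_erase hwf, erase_erase, sdiff_union_self_eq_union, union_sdiff_self_eq_union,
      hrel.Rmv_eq_captured hwf hy, captured_union_captured Pred_subset_captured]

lemma Relevant.move_comm (hwf : G.WF) (hrel : G.Relevant) (hy : y ∈ G.R) (hy' : y' ∈ G.R) :
    (G.move y).move y' = (G.move y').move y := by
  rw [hrel.move_move hwf hy hy', hrel.move_move hwf hy' hy, union_comm]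

/-! ### Reversing arcs and colours -/

def op (G : Pos α) : Pos α := ⟨G.V, G.A.image Prod.swap, G.R⟩

@[simp] lemma op_V : G.op.V = G.V := rfl

@[simp] lemma op_left : G.op.left = G.R := rfl

lemma mem_op_A : (a, b) ∈ G.op.A ↔ (b, a) ∈ G.A := by
  simp [op]

lemma WF.op_R (hwf : G.WF) : G.op.R = G.left := by
  rw [R, op_V, op_left, R, Finset.sdiff_sdiff_eq_self hwf.2]

lemma WF.op (hwf : G.WF) : G.op.WF :=
  ⟨fun _ hp => by
    obtain ⟨q, hq, rfl⟩ := mem_image.1 hp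
    exact (hwf.1 q hq).symm, sdiff_subset⟩

lemma reach_op : G.op.Reach a b ↔ G.Reach b a := by
  rw [Reach, Reach, ← Relation.reflTransGen_swap]
  simp only [mem_op_A]

lemma op_Succ : G.op.Succ z = G.Pred z := by
  ext u
  rw [mem_Succ, mem_Pred, reach_op, op_V]

lemma op_Pred : G.op.Pred z = G.Succ z := by
  ext u
  rw [mem_Succ, mem_Pred, reach_op, op_V]

lemma op_erase : (G.erase S).op = G.op.erase S := by
  obtain ⟨V, A, L⟩ := G
  simp only [op, Pos.erase, R, Pos.mk.injEq, true_and]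
  constructor
  · ext ⟨a, b⟩
    simp [and_comm]
  · ext z
    simp only [mem_sdiff]
    tauto

lemma WF.op_Forc (hwf : G.WF) : G.op.Forc = G.Forc := by
  rw [Forc, Forc, ForcL, ForcR, ForcL, ForcR, union_comm]
  simp only [op_left, hwf.op_R, op_Succ, op_Pred]

lemma Relevant.op (hwf : G.WF) (hrel : G.Relevant) : G.op.Relevant :=
  hwf.op_Forc.trans hrel

lemma WF.op_Rmv (hwf : G.WF) (z : α) : G.op.Rmv z = G.Rmv z := by
  by_cases hzl : z ∈ G.left
  · have : z ∉ G.op.left := fun h => (mem_R.1 h).2 hzl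
    rw [Rmv, if_neg this, Rmv, if_pos hzl, op_Pred, ← op_erase, (hwf.erase _).op_Forc]
  by_cases hzV : z ∈ G.V
  · rw [Rmv, if_pos (show z ∈ G.op.left from mem_R.2 ⟨hzV, hzl⟩), Rmv, if_neg hzl, op_Succ,
      ← op_erase, (hwf.erase _).op_Forc]
  · have hzR : z ∉ G.op.left := fun h => hzV (mem_R.1 h).1
    rw [Rmv, if_neg hzR, Rmv, if_neg hzl, hwf.op.Pred_eq_empty hzV, hwf.Pred_eq_empty hzV,
      hwf.op.erase_empty, hwf.erase_empty, hwf.op_Forc]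

lemma WF.op_move (hwf : G.WF) (z : α) : G.op.move z = (G.move z).op := by
  rw [Pos.move, Pos.move, hwf.op_Rmv, op_erase]

/-! ### Left moves -/

lemma Relevant.Rmv_eq_captured_op (hwf : G.WF) (hrel : G.Relevant) (hx : x ∈ G.left) :
    G.Rmv x = G.op.captured (G.Succ x) := by
  rw [← hwf.op_Rmv, (hrel.op hwf).Rmv_eq_captured hwf.op (by rwa [hwf.op_R]), op_Pred]

lemma mem_captured_op : z ∈ G.op.captured S ↔ z ∈ G.V ∧ ∀ u ∈ G.Succ z, u ∈ G.R → u ∈ S := by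
  rw [mem_captured, op_Pred, op_left, op_V]

lemma Relevant.move_of_mem_left (hwf : G.WF) (hrel : G.Relevant) (hx : x ∈ G.left) :
    (G.move x).Relevant := by
  have h := (hrel.op hwf).move_of_mem_R hwf.op (by rwa [hwf.op_R])
  rwa [hwf.op_move, Relevant, (hwf.move x).op_Forc] at h

lemma Relevant.move (hwf : G.WF) (hrel : G.Relevant) (hx : x ∈ G.V) : (G.move x).Relevant := by
  by_cases hxl : x ∈ G.left
  · exact hrel.move_of_mem_left hwf hxl
  · exact hrel.move_of_mem_R hwf (mem_R.2 ⟨hx, hxl⟩)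

lemma Relevant.mem_Rmv_of_mem_Rmv (hwf : G.WF) (hrel : G.Relevant) (hx : x ∈ G.left)
    (hy : y ∈ G.R) (h : y ∈ G.Rmv x) : x ∈ G.Rmv y := by
  rw [hrel.Rmv_eq_captured_op hwf hx, mem_captured_op] at h
  have hyx : y ∈ G.Succ x := h.2 y (mem_Succ_self h.1) hy
  rw [hrel.Rmv_eq_captured hwf hy]
  exact Pred_subset_captured (mem_Pred.2 ⟨hwf.2 hx, (mem_Succ.1 hyx).2⟩)

lemma Relevant.Rmv_move_of_mem_left (hwf : G.WF) (hrel : G.Relevant) (hy : y ∈ G.R)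
    (hx : x ∈ G.left) (hxy : x ∉ G.Rmv y) : (G.move y).Rmv x = G.Rmv x \ G.Rmv y := by
  have hC := hrel.Rmv_predClosed hwf hy
  rw [(hrel.move_of_mem_R hwf hy).Rmv_eq_captured_op (hwf.move y) (mem_sdiff.2 ⟨hx, hxy⟩),
    hrel.Rmv_eq_captured_op hwf hx, Pos.move, hC.Succ_erase hwf hxy]
  ext z
  rw [mem_captured_op, mem_sdiff, mem_captured_op]
  by_cases hz : z ∈ G.Rmv y
  · simp [hz]
  · have hSz : ∀ u ∈ G.Succ z, u ∉ G.Rmv y := fun u hu huC =>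
      hz (hC.mem_of_reach (mem_Succ.1 hu).2 huC)
    rw [hC.Succ_erase hwf hz, erase_V, erase_R]
    simp only [mem_sdiff, hz, not_false_eq_true, and_true]
    exact and_congr_right fun _ => forall₂_congr fun u hu => by simp [hSz u hu]

lemma Relevant.Rmv_move_of_mem_R (hwf : G.WF) (hrel : G.Relevant) (hx : x ∈ G.left)
    (hy : y ∈ G.R) (hyx : y ∉ G.Rmv x) : (G.move x).Rmv y = G.Rmv y \ G.Rmv x := by
  have h := (hrel.op hwf).Rmv_move_of_mem_left hwf.op (by rwa [hwf.op_R]) hy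
    (by rwa [hwf.op_Rmv])
  rwa [hwf.op_move, (hwf.move x).op_Rmv, hwf.op_Rmv, hwf.op_Rmv] at h

lemma move_move_eq : (G.move x).move y = G.erase (G.Rmv x ∪ (G.move x).Rmv y) := erase_erase

lemma Relevant.move_comm_of_mem_left (hwf : G.WF) (hrel : G.Relevant) (hx : x ∈ G.left)
    (hy : y ∈ G.R) (hxy : x ∉ G.Rmv y) : (G.move y).move x = (G.move x).move y := by
  have hyx : y ∉ G.Rmv x := fun h => hxy (hrel.mem_Rmv_of_mem_Rmv hwf hx hy h)
  rw [move_move_eq, move_move_eq, hrel.Rmv_move_of_mem_left hwf hy hx hxy,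
    hrel.Rmv_move_of_mem_R hwf hx hy hyx, union_sdiff_self_eq_union, union_sdiff_self_eq_union,
    union_comm]

/-! ### Scores -/

lemma sLAux_succ_eq (k : ℕ) : ∀ G : Pos α, G.WF → G.V.card ≤ k →
    sL1Aux (k + 1) G = sL1Aux k G ∧ sL2Aux (k + 1) G = sL2Aux k G := by
  induction k with
  | zero =>
    intro G hwf hk
    have hV : G.V = ∅ := card_eq_zero.1 (Nat.le_zero.1 hk)
    have hL : G.left = ∅ := subset_empty.1 (hV ▸ hwf.2)
    have hR : G.R = ∅ := by rw [R, hV, empty_sdiff]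
    simp [sL1Aux, sL2Aux, hL, hR]
  | succ k ih =>
    intro G hwf hk
    have ihm : ∀ x ∈ G.V, _ := fun x hx => ih (G.move x) (hwf.move x) (by
      have := card_move_lt hx
      omega)
    constructor
    · rw [sL1Aux, sL1Aux]
      exact ite_congr rfl (fun _ => sup_congr rfl fun x hx => by rw [(ihm x (hwf.2 hx)).2])
        fun _ => rfl
    · rw [sL2Aux, sL2Aux]
      exact dite_congr rfl (fun h => inf'_congr h rfl fun y hy => (ihm y (mem_R.1 hy).1).1)
        fun _ => rfl

lemma WF.sLAux_eq (hwf : G.WF) {k : ℕ} (hk : G.V.card ≤ k) :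
    sL1Aux k G = G.sL1 ∧ sL2Aux k G = G.sL2 := by
  induction k, hk using Nat.le_induction with
  | base => exact ⟨rfl, rfl⟩
  | succ k hk ih =>
    obtain ⟨h1, h2⟩ := sLAux_succ_eq k G hwf hk
    exact ⟨h1.trans ih.1, h2.trans ih.2⟩

lemma WF.sL1_eq (hwf : G.WF) : G.sL1 =
    if G.left.Nonempty then G.left.sup fun x => (G.Rmv x).card + (G.move x).sL2 else 0 := by
  rw [← (hwf.sLAux_eq (Nat.le_succ _)).1, sL1Aux]
  exact ite_congr rfl (fun _ => sup_congr rfl fun x hx => by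
    rw [((hwf.move x).sLAux_eq (card_move_lt (hwf.2 hx)).le).2]) fun _ => rfl

lemma WF.sL2_eq (hwf : G.WF) : G.sL2 =
    if h : G.R.Nonempty then G.R.inf' h fun y => (G.move y).sL1 else 0 := by
  rw [← (hwf.sLAux_eq (Nat.le_succ _)).2, sL2Aux]
  exact dite_congr rfl (fun h => inf'_congr h rfl fun y hy =>
    ((hwf.move y).sLAux_eq (card_move_lt (mem_R.1 hy).1).le).1) fun _ => rfl

lemma WF.le_sL1 (hwf : G.WF) (hx : x ∈ G.left) : (G.Rmv x).card + (G.move x).sL2 ≤ G.sL1 := by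
  rw [hwf.sL1_eq, if_pos ⟨x, hx⟩]
  exact le_sup (f := fun x => (G.Rmv x).card + (G.move x).sL2) hx

lemma WF.sL1_le (hwf : G.WF) {n : ℕ} (h : ∀ x ∈ G.left, (G.Rmv x).card + (G.move x).sL2 ≤ n) :
    G.sL1 ≤ n := by
  rw [hwf.sL1_eq]
  split_ifs
  · exact Finset.sup_le h
  · exact n.zero_le

lemma WF.sL2_le (hwf : G.WF) (hy : y ∈ G.R) : G.sL2 ≤ (G.move y).sL1 := by
  rw [hwf.sL2_eq, dif_pos ⟨y, hy⟩]
  exact inf'_le _ hy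

lemma WF.le_sL2 (hwf : G.WF) (hy : y ∈ G.R) {n : ℕ} (h : ∀ y' ∈ G.R, n ≤ (G.move y').sL1) :
    n ≤ G.sL2 := by
  rw [hwf.sL2_eq, dif_pos ⟨y, hy⟩]
  exact le_inf' _ _ h

lemma WF.sL2_eq_zero (hwf : G.WF) (hR : G.R = ∅) : G.sL2 = 0 := by
  rw [hwf.sL2_eq, dif_neg (by rw [hR]; exact not_nonempty_empty)]

lemma sLAux_op_eq_sRAux (k : ℕ) : ∀ G : Pos α, G.WF →
    sL1Aux k G.op = sR1Aux k G ∧ sL2Aux k G.op = sR2Aux k G := by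
  induction k with
  | zero => exact fun _ _ => ⟨rfl, rfl⟩
  | succ k ih =>
    intro G hwf
    constructor
    · rw [sL1Aux, sR1Aux, op_left]
      exact ite_congr rfl (fun _ => sup_congr rfl fun y _ => by
        rw [hwf.op_Rmv, hwf.op_move, (ih _ (hwf.move y)).2]) fun _ => rfl
    · rw [sL2Aux, sR2Aux]
      simp only [hwf.op_R]
      exact dite_congr rfl (fun h => inf'_congr h rfl fun x _ => by
        rw [hwf.op_move, (ih _ (hwf.move x)).1]) fun _ => rfl

lemma WF.sR1_eq_sL1_op (hwf : G.WF) : G.sR1 = G.op.sL1 :=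
  (sLAux_op_eq_sRAux _ G hwf).1.symm

/-! ### Right moves do not increase Left's scores -/

lemma Relevant.sL1_move_le_of (hwf : G.WF) (hrel : G.Relevant)
    (ih : ∀ x ∈ G.left, ∀ y ∉ (G.move x).left, ((G.move x).move y).sL2 ≤ (G.move x).sL2)
    (hy : y ∉ G.left) : (G.move y).sL1 ≤ G.sL1 := by
  by_cases hyV : y ∈ G.V
  swap
  · rw [hrel.move_eq_self hwf hyV]
  have hyR : y ∈ G.R := mem_R.2 ⟨hyV, hy⟩
  refine (hwf.move y).sL1_le fun x hx => ?_
  obtain ⟨hxl, hxy⟩ := mem_sdiff.1 hx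
  calc ((G.move y).Rmv x).card + ((G.move y).move x).sL2
      ≤ (G.Rmv x).card + ((G.move x).move y).sL2 := by
        rw [hrel.Rmv_move_of_mem_left hwf hyR hxl hxy,
          hrel.move_comm_of_mem_left hwf hxl hyR hxy]
        gcongr
        exact sdiff_subset
    _ ≤ (G.Rmv x).card + (G.move x).sL2 := by
        gcongr
        exact ih x hxl y fun h => hy (mem_sdiff.1 h).1
    _ ≤ G.sL1 := hwf.le_sL1 hxl

lemma Relevant.sL2_move_le_of (hwf : G.WF) (hrel : G.Relevant)
    (ih₁ : ∀ y' ∈ G.R, ∀ y ∉ (G.move y').left, ((G.move y').move y).sL1 ≤ (G.move y').sL1)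
    (ih₂ : ∀ y ∈ G.R, (G.move y).sL2 ≤ (G.move y).sL1)
    (hy : y ∉ G.left) : (G.move y).sL2 ≤ G.sL2 := by
  by_cases hyV : y ∈ G.V
  swap
  · rw [hrel.move_eq_self hwf hyV]
  have hyR : y ∈ G.R := mem_R.2 ⟨hyV, hy⟩
  refine hwf.le_sL2 hyR fun y' hy' => ?_
  calc (G.move y).sL2 ≤ ((G.move y).move y').sL1 := by
        by_cases h : y' ∈ G.Rmv y
        · rw [(hrel.move hwf hyV).move_eq_self (hwf.move y) fun h' => (mem_sdiff.1 h').2 h]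
          exact ih₂ y hyR
        · exact (hwf.move y).sL2_le (by rw [Pos.move, erase_R]; exact mem_sdiff.2 ⟨hy', h⟩)
    _ = ((G.move y').move y).sL1 := by rw [hrel.move_comm hwf hyR hy']
    _ ≤ (G.move y').sL1 := ih₁ y' hy' y fun h => hy (mem_sdiff.1 h).1

lemma WF.sL2_le_sL1_of (hwf : G.WF) (h : ∀ y ∈ G.R, (G.move y).sL1 ≤ G.sL1) :
    G.sL2 ≤ G.sL1 := by
  rcases G.R.eq_empty_or_nonempty with hR | ⟨y, hy⟩
  · rw [hwf.sL2_eq_zero hR]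
    exact Nat.zero_le _
  · exact (hwf.sL2_le hy).trans (h y hy)

theorem Relevant.sL_move_le (hwf : G.WF) (hrel : G.Relevant) :
    (∀ y ∉ G.left, (G.move y).sL1 ≤ G.sL1) ∧ (∀ y ∉ G.left, (G.move y).sL2 ≤ G.sL2) ∧
      G.sL2 ≤ G.sL1 := by
  induction hn : G.V.card using Nat.strong_induction_on generalizing G with
  | _ n ih =>
  have ihm : ∀ x ∈ G.V, _ := fun x hx =>
    ih _ (hn ▸ card_move_lt hx) (hwf.move x) (hrel.move hwf hx) rfl
  have h₁ : ∀ y ∉ G.left, (G.move y).sL1 ≤ G.sL1 := fun y hy =>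
    hrel.sL1_move_le_of hwf (fun x hx => (ihm x (hwf.2 hx)).2.1) hy
  refine ⟨h₁, fun y hy => hrel.sL2_move_le_of hwf (fun y' hy' => (ihm y' (mem_R.1 hy').1).1)
    (fun y' hy' => (ihm y' (mem_R.1 hy').1).2.2) hy,
    hwf.sL2_le_sL1_of fun y hy => h₁ y (mem_R.1 hy).2⟩

theorem Relevant.sL1_move_le_of_mem_Rmv (hwf : G.WF) (hrel : G.Relevant) (hy : y ∈ G.R)
    (hy' : y' ∈ G.R) (h : y' ∈ G.Rmv y) : (G.move y).sL1 ≤ (G.move y').sL1 :=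
  calc (G.move y).sL1 = ((G.move y).move y').sL1 := by
        rw [(hrel.move hwf (mem_R.1 hy).1).move_eq_self (hwf.move y)
          fun h' => (mem_sdiff.1 h').2 h]
    _ = ((G.move y').move y).sL1 := by rw [hrel.move_comm hwf hy hy']
    _ ≤ (G.move y').sL1 := ((hrel.move hwf (mem_R.1 hy').1).sL_move_le (hwf.move y')).1 y
        fun h' => (mem_R.1 hy).2 (mem_sdiff.1 h').1

end Influence.Pos

open Influence Influence.Pos Finset

/-- included moves cannot be better. -/
theorem influence_included_moves {α : Type} [DecidableEq α] (G : Pos α)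
    (hwf : G.WF) (hrel : G.Relevant) :
    (∀ y ∈ G.R, ∀ y' ∈ G.R, y' ∈ G.Rmv y → (G.move y).sL1 ≤ (G.move y').sL1) ∧
    (∀ x ∈ G.left, ∀ x' ∈ G.left, x' ∈ G.Rmv x → (G.move x).sR1 ≤ (G.move x').sR1) := by
  refine ⟨fun y hy y' hy' h => hrel.sL1_move_le_of_mem_Rmv hwf hy hy' h, fun x hx x' hx' h => ?_⟩
  have hop := (hrel.op hwf).sL1_move_le_of_mem_Rmv hwf.op (y := x) (y' := x') (by rwa [hwf.op_R])
    (by rwa [hwf.op_R]) (by rwa [hwf.op_Rmv])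
  rwa [hwf.op_move, hwf.op_move, ← (hwf.move x).sR1_eq_sL1_op,
    ← (hwf.move x').sR1_eq_sL1_op] at hop
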